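/- arXiv:1711.09014 — 2 statements merged into one kernel-verified Lean document; each statement's English description precedes it below -/
import Mathlib

section
/- Let T be a tree on n ≥ 5 vertices that is isomorphic to neither the path P_n nor the star S_n. Then Π1(T) > Π1(S_n) = (n−1)^2 and Π2(T) > Π2(P_n) = 4^{n−2}. -/
open SimpleGraph Finset

/-- Degree of a vertex (as `Nat.card` of its neighbor set). -/
noncomputable def mdeg {V : Type*} (G : SimpleGraph V) (v : V) : ℕ :=
  Nat.card (G.neighborSet v)

/-- First multiplicative Zagreb index. -/
noncomputable def mZ1 {V : Type*} [Fintype V] (G : SimpleGraph V) : ℕ :=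
  ∏ v : V, (mdeg G v) ^ 2

/-- Second multiplicative Zagreb index. -/
noncomputable def mZ2 {V : Type*} [Fintype V] (G : SimpleGraph V) : ℕ :=
  ∏ v : V, (mdeg G v) ^ (mdeg G v)

/-- The star on `n` vertices, with center `0`. -/
def starGraphFin (n : ℕ) : SimpleGraph (Fin n) :=
  SimpleGraph.fromRel (fun u _ => u.val = 0)

/-!
Write `d v` for the degrees of a tree on `n ≥ 2` vertices. Since there are `n - 1` edges and no
isolated vertices, `∑ v, (d v - 1) = n - 2`. A tree that is not a star has two vertices with
`d v - 1 ≥ 1`, and for nonnegative `x v` with two of them positive,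
`∏ v, (1 + x v) > 1 + ∑ v, x v`; hence `∏ v, d v > n - 1`. A tree whose degrees are at most
`2` is a path, so a tree that is not a path has a vertex of degree at least `3`; comparing
vertexwise with `4 ^ (d - 1) ≤ d ^ d`, strict for `d ≥ 3`, gives
`∏ v, d v ^ d v > 4 ^ ∑ v, (d v - 1) = 4 ^ (n - 2)`.
-/

theorem Finset.one_add_sum_le_prod_one_add {ι : Type*} (s : Finset ι) (x : ι → ℕ) :
    1 + ∑ i ∈ s, x i ≤ ∏ i ∈ s, (1 + x i) := by
  classical
  induction s using Finset.induction_on with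
  | empty => simp
  | insert a s ha ih =>
    rw [sum_insert ha, prod_insert ha]
    nlinarith [Nat.zero_le (x a), Nat.zero_le (∑ i ∈ s, x i)]

theorem Finset.one_add_sum_lt_prod_one_add {ι : Type*} [DecidableEq ι] {s : Finset ι}
    {x : ι → ℕ} {i j : ι} (hi : i ∈ s) (hj : j ∈ s) (hij : i ≠ j) (hxi : x i ≠ 0)
    (hxj : x j ≠ 0) : 1 + ∑ k ∈ s, x k < ∏ k ∈ s, (1 + x k) := by
  have hrest : x j ≤ ∑ k ∈ s.erase i, x k :=
    single_le_sum (fun _ _ ↦ Nat.zero_le _) (mem_erase.2 ⟨hij.symm, hj⟩)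
  have := (s.erase i).one_add_sum_le_prod_one_add x
  rw [← add_sum_erase s x hi, ← mul_prod_erase s _ hi]
  nlinarith [Nat.pos_of_ne_zero hxi, Nat.pos_of_ne_zero hxj]

theorem Nat.four_pow_pred_le_self_pow (d : ℕ) : 4 ^ (d - 1) ≤ d ^ d := by
  rcases Nat.lt_or_ge d 4 with hd | hd
  · interval_cases d <;> norm_num
  · calc 4 ^ (d - 1) ≤ d ^ (d - 1) := Nat.pow_le_pow_left hd _
      _ ≤ d ^ d := Nat.pow_le_pow_right (by omega) (by omega)

theorem Nat.four_pow_pred_lt_self_pow {d : ℕ} (hd : 3 ≤ d) : 4 ^ (d - 1) < d ^ d := by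
  rcases Nat.lt_or_ge d 4 with hd' | hd'
  · interval_cases d; norm_num
  · calc 4 ^ (d - 1) < 4 ^ d := Nat.pow_lt_pow_right (by norm_num) (by omega)
      _ ≤ d ^ d := Nat.pow_le_pow_left hd' _

theorem mdeg_eq_degree {V : Type*} (G : SimpleGraph V) (v : V) [Fintype (G.neighborSet v)] :
    mdeg G v = G.degree v := by
  rw [mdeg, Nat.card_eq_fintype_card, card_neighborSet_eq_degree]

theorem mZ1_eq_prod_degree_sq {V : Type*} [Fintype V] (G : SimpleGraph V) [DecidableRel G.Adj] :
    mZ1 G = (∏ v, G.degree v) ^ 2 := by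
  simp [mZ1, mdeg_eq_degree, prod_pow]

theorem mZ2_eq_prod_degree_pow {V : Type*} [Fintype V] (G : SimpleGraph V) [DecidableRel G.Adj] :
    mZ2 G = ∏ v, G.degree v ^ G.degree v := by
  simp [mZ2, mdeg_eq_degree]

theorem starGraphFin_adj {n : ℕ} {u v : Fin n} :
    (starGraphFin n).Adj u v ↔ u ≠ v ∧ (u.val = 0 ∨ v.val = 0) := by
  simp [starGraphFin]

theorem mdeg_starGraphFin {n : ℕ} (v : Fin n) :
    mdeg (starGraphFin n) v = if v.val = 0 then n - 1 else 1 := by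
  classical
  rw [mdeg_eq_degree, ← card_neighborFinset_eq_degree]
  split_ifs with hv
  · have : (starGraphFin n).neighborFinset v = univ.erase v := by
      ext u
      simp [starGraphFin_adj, hv, eq_comm]
    rw [this, card_erase_of_mem (mem_univ v), card_univ, Fintype.card_fin]
  · rw [card_eq_one]
    refine ⟨⟨0, v.pos⟩, ?_⟩
    ext u
    simp only [mem_neighborFinset, starGraphFin_adj, mem_singleton, ne_eq, Fin.ext_iff, hv]
    grind

theorem mZ1_starGraphFin {n : ℕ} (hn : n ≠ 0) : mZ1 (starGraphFin n) = (n - 1) ^ 2 := by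
  rw [mZ1, prod_eq_single ⟨0, Nat.pos_of_ne_zero hn⟩]
  · simp [mdeg_starGraphFin]
  · intro v _ hv
    simp [mdeg_starGraphFin, Fin.ext_iff.not.mp hv]
  · simp

theorem mdeg_pathGraph {n : ℕ} (hn : 2 ≤ n) (v : Fin n) :
    mdeg (pathGraph n) v = if v.val = 0 ∨ v.val = n - 1 then 1 else 2 := by
  classical
  rw [mdeg_eq_degree, ← card_neighborFinset_eq_degree]
  split_ifs with hv
  · rw [card_eq_one]
    refine ⟨⟨if v.val = 0 then 1 else n - 2, by split_ifs <;> omega⟩, ?_⟩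
    ext u
    simp only [mem_neighborFinset, pathGraph_adj, mem_singleton, Fin.ext_iff]
    split_ifs <;> omega
  · rw [card_eq_two]
    refine ⟨⟨v.val - 1, by omega⟩, ⟨v.val + 1, by omega⟩, by simp [Fin.ext_iff], ?_⟩
    ext u
    simp only [mem_neighborFinset, pathGraph_adj, mem_insert, mem_singleton, Fin.ext_iff]
    omega

theorem mZ2_pathGraph {n : ℕ} (hn : 2 ≤ n) : mZ2 (pathGraph n) = 4 ^ (n - 2) := by
  obtain ⟨m, rfl⟩ : ∃ m, n = m + 2 := ⟨n - 2, by omega⟩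
  let f : ℕ → ℕ := fun i ↦ if i = 0 ∨ i = m + 1 then 1 else 4
  have hf : ∀ v : Fin (m + 2), mdeg (pathGraph _) v ^ mdeg (pathGraph _) v = f v := by
    intro v
    rw [mdeg_pathGraph hn]
    split_ifs <;> simp_all [f]
  rw [mZ2, prod_congr rfl fun v _ ↦ hf v, Fin.prod_univ_eq_prod_range f, prod_range_succ,
    prod_range_succ', prod_congr rfl fun i hi ↦ (if_neg (by simp at hi; omega) : f (i + 1) = 4)]
  simp [f]

namespace SimpleGraph

section

variable {V : Type*} [Fintype V] [Nontrivial V] {G : SimpleGraph V} [DecidableRel G.Adj]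

theorem IsTree.sum_degree_sub_one (hG : G.IsTree) :
    ∑ v, (G.degree v - 1) = Fintype.card V - 2 := by
  have hpos (v : V) : 1 ≤ G.degree v := hG.connected.preconnected.degree_pos_of_nontrivial v
  have hedges := hG.card_edgeFinset
  rw [sum_tsub_distrib _ fun v _ ↦ hpos v, sum_degrees_eq_twice_card_edges, sum_const, card_univ,
    smul_eq_mul, mul_one]
  omega

theorem IsTree.card_sub_one_lt_prod_degree [DecidableEq V] (hG : G.IsTree) {u v : V}
    (huv : u ≠ v) (hu : 2 ≤ G.degree u) (hv : 2 ≤ G.degree v) :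
    Fintype.card V - 1 < ∏ w, G.degree w := by
  have hpos (w : V) : 0 < G.degree w := hG.connected.preconnected.degree_pos_of_nontrivial w
  have hcard := Fintype.one_lt_card (α := V)
  calc Fintype.card V - 1 = 1 + ∑ w, (G.degree w - 1) := by rw [hG.sum_degree_sub_one]; omega
    _ < ∏ w, (1 + (G.degree w - 1)) :=
      one_add_sum_lt_prod_one_add (mem_univ u) (mem_univ v) huv (by omega) (by omega)
    _ = ∏ w, G.degree w := prod_congr rfl fun w _ ↦ by have := hpos w; omega

theorem IsTree.four_pow_lt_prod_degree_pow (hG : G.IsTree) {u : V} (hu : 3 ≤ G.degree u) :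
    4 ^ (Fintype.card V - 2) < ∏ v, G.degree v ^ G.degree v :=
  calc 4 ^ (Fintype.card V - 2) = ∏ v, 4 ^ (G.degree v - 1) := by
        rw [prod_pow_eq_pow_sum, hG.sum_degree_sub_one]
    _ < ∏ v, G.degree v ^ G.degree v :=
      prod_lt_prod (fun _ _ ↦ by positivity) (fun v _ ↦ Nat.four_pow_pred_le_self_pow _)
        ⟨u, mem_univ u, Nat.four_pow_pred_lt_self_pow hu⟩

end

theorem Walk.IsPath.degree_le_ncard_neighborSet_toSubgraph {V : Type*} [DecidableEq V]
    {G : SimpleGraph V} [G.LocallyFinite] {u v w : V} {p : G.Walk u v} (hp : p.IsPath)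
    (hne : u ≠ v) (hu : G.degree u = 1) (hv : G.degree v = 1) (hw : G.degree w ≤ 2)
    (hwp : w ∈ p.support) : G.degree w ≤ (p.toSubgraph.neighborSet w).ncard := by
  have hnil : ¬p.Nil := fun h ↦ hne h.eq
  obtain ⟨i, rfl, hi⟩ := Walk.mem_support_iff_exists_getVert.mp hwp
  rcases Nat.eq_zero_or_pos i with rfl | hpos
  · rw [Walk.getVert_zero]
    simp [hp.neighborSet_toSubgraph_startpoint hnil, hu]
  rcases hi.lt_or_eq with hlt | rfl
  · rwa [hp.ncard_neighborSet_toSubgraph_internal_eq_two hpos.ne' hlt]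
  · rw [Walk.getVert_length]
    simp [hp.neighborSet_toSubgraph_endpoint hnil, hv]

/-- Since degrees are at most `2`, the path joining two leaves already contains every edge at each
of its vertices; by connectedness it therefore spans the tree. -/
theorem IsTree.nonempty_iso_pathGraph {V : Type*} [Fintype V] [Nontrivial V] {G : SimpleGraph V}
    [DecidableRel G.Adj] (hG : G.IsTree) (hdeg : ∀ v, G.degree v ≤ 2) :
    Nonempty (G ≃g pathGraph (Fintype.card V)) := by
  classical
  obtain ⟨u, v, hne, hu, hv⟩ := hG.exists_ne_and_degree_eq_one
  obtain ⟨p, hp⟩ := hG.connected.exists_isPath u v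
  have hclosed : ∀ w ∈ p.toSubgraph.verts, ∀ x, G.Adj w x → p.toSubgraph.Adj w x := by
    intro w hw x hx
    have heq := Set.eq_of_subset_of_ncard_le (p.toSubgraph.neighborSet_subset w) (by
      rw [Set.ncard_eq_toFinset_card', Set.toFinset_card, card_neighborSet_eq_degree]
      exact hp.degree_le_ncard_neighborSet_toSubgraph hne hu hv (hdeg w)
        (p.mem_verts_toSubgraph.mp hw))
    exact (heq ▸ hx : x ∈ p.toSubgraph.neighborSet w)
  have hverts (w : V) : w ∈ p.toSubgraph.verts :=
    (hG.connected.preconnected u w).mem_subgraphVerts hclosed p.start_mem_verts_toSubgraph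
  have htop : p.toSubgraph = ⊤ := by
    ext a b
    · simpa using hverts a
    · exact ⟨fun h ↦ h.adj_sub, hclosed a (hverts a) b⟩
  let e : pathGraph (p.length + 1) ≃g G :=
    hp.pathGraphIsoToSubgraph.trans (htop ▸ Subgraph.topIso)
  have hcard : p.length + 1 = Fintype.card V := by simpa using Fintype.card_congr e.toEquiv
  exact hcard ▸ ⟨e.symm⟩

section

variable {n : ℕ} {G : SimpleGraph (Fin n)} [DecidableRel G.Adj]

theorem IsTree.nonempty_iso_starGraphFin (hG : G.IsTree) (hn : 2 ≤ n) (c : Fin n)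
    (hleaf : ∀ v, v ≠ c → G.degree v = 1) : Nonempty (G ≃g starGraphFin n) := by
  have : Nontrivial (Fin n) := Fin.nontrivial_iff_two_le.mpr hn
  have hc : G.IsUniversal c := by
    have hsum := hG.sum_degree_sub_one
    rw [sum_eq_single c (fun v _ hv ↦ by simp [hleaf v hv]) (by simp), Fintype.card_fin] at hsum
    have := hG.connected.preconnected.degree_pos_of_nontrivial c
    exact (G.degree_eq_card_sub_one c).mp (by rw [Fintype.card_fin]; omega)
  have hadj (u v : Fin n) : G.Adj u v ↔ u ≠ v ∧ (u = c ∨ v = c) := by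
    refine ⟨fun h ↦ ⟨h.ne, or_iff_not_imp_left.2 fun hu ↦ ?_⟩, ?_⟩
    · obtain ⟨w, -, hw⟩ := degree_eq_one_iff_existsUnique_adj.mp (hleaf u hu)
      exact (hw v h).trans (hw c (hc (Ne.symm hu)).symm).symm
    · rintro ⟨huv, rfl | rfl⟩
      exacts [hc huv, (hc huv.symm).symm]
  let e := Equiv.swap c ⟨0, c.pos⟩
  have he (v : Fin n) : (e v).val = 0 ↔ v = c :=
    (Fin.ext_iff (b := ⟨0, c.pos⟩)).symm.trans (by simp [e, Equiv.swap_apply_eq_iff])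
  have : G = (starGraphFin n).comap e := by
    ext u v
    simp [hadj, starGraphFin_adj, he]
  exact this ▸ ⟨Iso.comap _ _⟩

theorem IsTree.exists_ne_two_le_degree (hG : G.IsTree) (hn : 2 ≤ n)
    (hS : IsEmpty (G ≃g starGraphFin n)) : ∃ u v, u ≠ v ∧ 2 ≤ G.degree u ∧ 2 ≤ G.degree v := by
  by_contra! h
  obtain ⟨c, hc⟩ : ∃ c, ∀ v, v ≠ c → G.degree v < 2 := by
    by_cases hbig : ∃ c, 2 ≤ G.degree c
    · obtain ⟨c, hc⟩ := hbig
      exact ⟨c, fun v hv ↦ lt_of_not_ge fun hv' ↦ (h v c hv hv').not_ge hc⟩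
    · simp only [not_exists, not_le] at hbig
      exact ⟨⟨0, by omega⟩, fun v _ ↦ hbig v⟩
  have : Nontrivial (Fin n) := Fin.nontrivial_iff_two_le.mpr hn
  refine hS.false (hG.nonempty_iso_starGraphFin hn c fun v hv ↦ ?_).some
  have := hG.connected.preconnected.degree_pos_of_nontrivial v
  have := hc v hv
  omega

end

end SimpleGraph

theorem stmt10 (n : ℕ) (hn : 5 ≤ n) (T : SimpleGraph (Fin n)) (hT : T.IsTree)
    (hP : IsEmpty (T ≃g SimpleGraph.pathGraph n)) (hS : IsEmpty (T ≃g starGraphFin n)) :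
    (mZ1 (starGraphFin n) = (n - 1) ^ 2 ∧ (n - 1) ^ 2 < mZ1 T) ∧
      (mZ2 (SimpleGraph.pathGraph n) = 4 ^ (n - 2) ∧ 4 ^ (n - 2) < mZ2 T) := by
  classical
  have : Nontrivial (Fin n) := Fin.nontrivial_iff_two_le.mpr (by omega)
  refine ⟨⟨mZ1_starGraphFin (by omega), ?_⟩, ⟨mZ2_pathGraph (by omega), ?_⟩⟩
  · obtain ⟨u, v, huv, hu, hv⟩ := hT.exists_ne_two_le_degree (by omega) hS
    have hprod := hT.card_sub_one_lt_prod_degree huv hu hv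
    rw [Fintype.card_fin] at hprod
    rw [mZ1_eq_prod_degree_sq]
    exact Nat.pow_lt_pow_left hprod two_ne_zero
  · obtain ⟨u, hu⟩ : ∃ u, 3 ≤ T.degree u := by
      by_contra! hdeg
      have hiso := hT.nonempty_iso_pathGraph fun v ↦ Nat.le_of_lt_succ (hdeg v)
      rw [Fintype.card_fin] at hiso
      exact hP.false hiso.some
    simpa [mZ2_eq_prod_degree_pow] using hT.four_pow_lt_prod_degree_pow hu
end

section
/- Let G be a simple connected graph and let v_1, v_2 be distinct vertices of G with d(v_2) − d(v_1) ≥ 2. Let w be a neighbor of v_2 that is neither v_1 nor a neighbor of v_1, and let G_2 = G − v_2w + v_1w (so that in G_2 the degree of v_1 increases by 1, the degree of v_2 decreases by 1, and all other degrees are unchanged). Then Π2(G_2) < Π2(G). -/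
open SimpleGraph Finset

/-!
`n ↦ n log n` is strictly convex, so moving one unit from a larger number `b` to a number
`a ≤ b - 2` strictly decreases `a log a + b log b`, i.e. strictly decreases `a ^ a * b ^ b`.
Rotating the edge `v₂w` to `v₁w` does exactly this to the degrees of `v₁` and `v₂` and leaves
every other degree (including that of `w`) unchanged, so the product of the factors
`d(v) ^ d(v)` of `Π₂` at `v₁, v₂` decreases and every other factor stays the same.
-/

lemma StrictConvexOn.map_add_add_map_sub_lt {𝕜 : Type*} [Field 𝕜] [LinearOrder 𝕜]
    [IsStrictOrderedRing 𝕜] {s : Set 𝕜} {f : 𝕜 → 𝕜} (hf : StrictConvexOn 𝕜 s f) {x y d : 𝕜}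
    (hx : x ∈ s) (hy : y ∈ s) (hd : 0 < d) (hxy : x + d < y) :
    f (x + d) + f (y - d) < f x + f y := by
  have hyx : 0 < y - x := by linarith
  set t := d / (y - x) with ht_def
  have ht : 0 < t := by positivity
  have ht1 : 0 < 1 - t := by rw [sub_pos, div_lt_one hyx]; linarith
  have hxd : x + d = (1 - t) • x + t • y := by simp only [smul_eq_mul, ht_def]; field_simp; ring
  have hyd : y - d = t • x + (1 - t) • y := by simp only [smul_eq_mul, ht_def]; field_simp; ring
  have h₁ := hf.2 hx hy (by linarith : x < y).ne ht1 ht (by ring)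
  have h₂ := hf.2 hx hy (by linarith : x < y).ne ht ht1 (by ring)
  rw [← hxd] at h₁
  rw [← hyd] at h₂
  simp only [smul_eq_mul] at h₁ h₂
  linarith

lemma pow_self_succ_mul_pow_self_lt {a c : ℕ} (h : a < c) :
    (a + 1) ^ (a + 1) * c ^ c < a ^ a * (c + 1) ^ (c + 1) := by
  have key := Real.strictConvexOn_mul_log.map_add_add_map_sub_lt (x := a) (y := c + 1)
    (Set.mem_Ici.2 a.cast_nonneg) (Set.mem_Ici.2 (by positivity)) one_pos
    (by exact_mod_cast Nat.add_lt_add_right h 1)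
  rw [add_sub_cancel_right] at key
  have hpos (n : ℕ) : (0 : ℝ) < (n : ℝ) ^ n := by exact_mod_cast Nat.pow_self_pos
  have hlog (n : ℕ) : Real.log ((n : ℝ) ^ n) = n * Real.log n := Real.log_pow n n
  rw [← Nat.cast_lt (α := ℝ)]
  simp only [Nat.cast_mul, Nat.cast_pow]
  rw [← Real.log_lt_log_iff (mul_pos (hpos _) (hpos _)) (mul_pos (hpos _) (hpos _)),
    Real.log_mul (hpos _).ne' (hpos _).ne', Real.log_mul (hpos _).ne' (hpos _).ne',
    hlog, hlog, hlog, hlog]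
  push_cast
  exact key

theorem Fintype.prod_lt_prod_of_eq_off_pair {ι R : Type*} [Fintype ι] [DecidableEq ι]
    [CommSemiring R] [PartialOrder R] [IsStrictOrderedRing R] {f g : ι → R} {i j : ι}
    (hij : i ≠ j) (hfg : ∀ k, k ≠ i → k ≠ j → f k = g k) (hg : ∀ k, 0 < g k)
    (hlt : f i * f j < g i * g j) : ∏ k, f k < ∏ k, g k := by
  rw [← prod_mul_prod_compl {i, j} f, ← prod_mul_prod_compl {i, j} g,
    prod_pair hij, prod_pair hij]
  have hcompl : ∏ k ∈ {i, j}ᶜ, f k = ∏ k ∈ {i, j}ᶜ, g k := by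
    refine Finset.prod_congr rfl fun k hk => ?_
    simp only [mem_compl, mem_insert, mem_singleton, not_or] at hk
    exact hfg k hk.1 hk.2
  rw [hcompl]
  exact mul_lt_mul_of_pos_right hlt (prod_pos fun k _ => hg k)

namespace SimpleGraph

variable {V : Type*} (G : SimpleGraph V) {u v w : V}

lemma neighborSet_sup_edge_of_ne (hu : v ≠ u) (hw : v ≠ w) :
    (G ⊔ edge u w).neighborSet v = G.neighborSet v := by
  ext x
  simp [edge_adj, hu, hw]

lemma neighborSet_sup_edge_left (h : u ≠ w) :
    (G ⊔ edge u w).neighborSet u = insert w (G.neighborSet u) := by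
  ext x
  simp only [neighborSet_sup, Set.mem_union, mem_neighborSet, edge_adj, Set.mem_insert_iff]
  grind

lemma neighborSet_deleteEdges_of_ne (hu : v ≠ u) (hw : v ≠ w) :
    (G.deleteEdges {s(u, w)}).neighborSet v = G.neighborSet v := by
  ext x
  simp [hu, hw]

lemma neighborSet_deleteEdges_left :
    (G.deleteEdges {s(u, w)}).neighborSet u = G.neighborSet u \ {w} := by
  ext x
  simp only [mem_neighborSet, deleteEdges_adj, Set.mem_sdiff, Set.mem_singleton_iff, Sym2.eq_iff]
  grind [Adj.ne]

variable [Finite V]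

lemma mdeg_sup_edge_left (h : u ≠ w) (hn : ¬G.Adj u w) :
    mdeg (G ⊔ edge u w) u = mdeg G u + 1 := by
  simp only [mdeg, Nat.card_coe_set_eq, G.neighborSet_sup_edge_left h]
  exact Set.ncard_insert_of_notMem hn

lemma mdeg_sup_edge_right (h : u ≠ w) (hn : ¬G.Adj u w) :
    mdeg (G ⊔ edge u w) w = mdeg G w + 1 := by
  rw [edge_comm]
  exact G.mdeg_sup_edge_left h.symm fun h' => hn h'.symm

lemma mdeg_deleteEdges_left_add_one (h : G.Adj u w) :
    mdeg (G.deleteEdges {s(u, w)}) u + 1 = mdeg G u := by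
  simp only [mdeg, Nat.card_coe_set_eq, neighborSet_deleteEdges_left]
  exact Set.ncard_sdiff_singleton_add_one h

lemma mdeg_deleteEdges_right_add_one (h : G.Adj u w) :
    mdeg (G.deleteEdges {s(u, w)}) w + 1 = mdeg G w := by
  rw [Sym2.eq_swap]
  exact G.mdeg_deleteEdges_left_add_one h.symm

section RotateEdge

variable {v₁ v₂ : V}

lemma mdeg_rotateEdge_left (hv : v₁ ≠ v₂) (hwv₁ : w ≠ v₁) (hwadj : ¬G.Adj v₁ w) :
    mdeg (G.deleteEdges {s(v₂, w)} ⊔ edge v₁ w) v₁ = mdeg G v₁ + 1 := by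
  rw [mdeg_sup_edge_left _ hwv₁.symm fun h => hwadj (G.deleteEdges_le _ h), mdeg, mdeg,
    G.neighborSet_deleteEdges_of_ne hv hwv₁.symm]

lemma mdeg_rotateEdge_right_add_one (hv : v₁ ≠ v₂) (hw : G.Adj v₂ w) :
    mdeg (G.deleteEdges {s(v₂, w)} ⊔ edge v₁ w) v₂ + 1 = mdeg G v₂ := by
  rw [mdeg, neighborSet_sup_edge_of_ne _ hv.symm hw.ne, ← mdeg,
    G.mdeg_deleteEdges_left_add_one hw]

lemma mdeg_rotateEdge_of_ne (hw : G.Adj v₂ w) (hwv₁ : w ≠ v₁) (hwadj : ¬G.Adj v₁ w)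
    (hu₁ : u ≠ v₁) (hu₂ : u ≠ v₂) :
    mdeg (G.deleteEdges {s(v₂, w)} ⊔ edge v₁ w) u = mdeg G u := by
  obtain rfl | huw := eq_or_ne u w
  · rw [mdeg_sup_edge_right _ hwv₁.symm fun h => hwadj (G.deleteEdges_le _ h),
      G.mdeg_deleteEdges_right_add_one hw]
  · rw [mdeg, neighborSet_sup_edge_of_ne _ hu₁ huw, G.neighborSet_deleteEdges_of_ne hu₂ huw,
      ← mdeg]

end RotateEdge

end SimpleGraph

theorem stmt16_general {V : Type*} [Fintype V] (G : SimpleGraph V)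
    (v₁ v₂ : V) (hd : mdeg G v₁ + 2 ≤ mdeg G v₂)
    (w : V) (hw : G.Adj v₂ w) (hwv₁ : w ≠ v₁) (hwadj : ¬ G.Adj v₁ w) :
    mZ2 (G.deleteEdges {s(v₂, w)} ⊔ SimpleGraph.fromEdgeSet {s(v₁, w)}) < mZ2 G := by
  classical
  change mZ2 (G.deleteEdges {s(v₂, w)} ⊔ edge v₁ w) < mZ2 G
  have hv : v₁ ≠ v₂ := by rintro rfl; omega
  have hv₂ := G.mdeg_rotateEdge_right_add_one hv hw
  refine Fintype.prod_lt_prod_of_eq_off_pair hv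
    (fun u hu₁ hu₂ => by rw [G.mdeg_rotateEdge_of_ne hw hwv₁ hwadj hu₁ hu₂])
    (fun _ => Nat.pow_self_pos) ?_
  rw [G.mdeg_rotateEdge_left hv hwv₁ hwadj, ← hv₂]
  exact pow_self_succ_mul_pow_self_lt (by omega)

theorem stmt16 {V : Type*} [Fintype V] (G : SimpleGraph V) (hG : G.Connected)
    (v₁ v₂ : V) (hd : mdeg G v₁ + 2 ≤ mdeg G v₂)
    (w : V) (hw : G.Adj v₂ w) (hwv₁ : w ≠ v₁) (hwadj : ¬ G.Adj v₁ w) :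
    mZ2 (G.deleteEdges {s(v₂, w)} ⊔ SimpleGraph.fromEdgeSet {s(v₁, w)}) < mZ2 G :=
  stmt16_general G v₁ v₂ hd w hw hwv₁ hwadj
end
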